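/- For every compact subset K of ℂ and every δ > 0 there exists p₀ ∈ (0,1) such that for all p ∈ (p₀, 1): K is contained in the open disk of radius 1/(1−p) centered at 0, and sup_{z ∈ K} |e_p(z) − exp(z)| < δ. In other words, e_p converges uniformly to the exponential function on every compact subset of ℂ as p → 1⁻. -/

import Mathlib

/-- `[l]_p = 1 + p + ⋯ + p^(l-1)`. -/
noncomputable def qNat (p : ℝ) (l : ℕ) : ℝ := ∑ i ∈ Finset.range l, p ^ i

/-- `[n]_p! = ∏_{l=1}^{n} [l]_p`. -/
noncomputable def qFactorial (p : ℝ) : ℕ → ℝ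
  | 0 => 1
  | n + 1 => qFactorial p n * qNat p (n + 1)

/-- The complex `p`-exponential `e_p(z) = Σ_{n=0}^∞ z^n/[n]_p!`. -/
noncomputable def qExpC (p : ℝ) (z : ℂ) : ℂ := ∑' n : ℕ, z ^ n / (qFactorial p n : ℂ)

/-! Since `[l]_p` increases with `p` and `[l]_1 = l`, for `p₁ ≤ p < 1` we have
`1/n! ≤ 1/[n]_p! ≤ 1/[n]_{p₁}!`, and `Σ Rⁿ/[n]_{p₁}!` converges as soon as `R < 1/(1-p₁)`
(ratio test, because `[l]_{p₁} → 1/(1-p₁)`). By Tannery's theorem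
`Σ Rⁿ |1/[n]_p! - 1/n!| → 0` as `p → 1⁻`, and this sum bounds `|e_p(z) - exp z|` for all
`|z| ≤ R`. -/

open Filter Topology
open scoped Nat

lemma qNat_nonneg {p : ℝ} (hp : 0 ≤ p) (l : ℕ) : 0 ≤ qNat p l :=
  Finset.sum_nonneg fun i _ => pow_nonneg hp i

lemma one_le_qNat_succ {p : ℝ} (hp : 0 ≤ p) (n : ℕ) : 1 ≤ qNat p (n + 1) := by
  rw [qNat, Finset.sum_range_succ', pow_zero, le_add_iff_nonneg_left]
  exact Finset.sum_nonneg fun i _ => pow_nonneg hp (i + 1)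

lemma qNat_le_qNat {p q : ℝ} (hp : 0 ≤ p) (hpq : p ≤ q) (l : ℕ) : qNat p l ≤ qNat q l :=
  Finset.sum_le_sum fun i _ => pow_le_pow_left₀ hp hpq i

lemma qNat_one (l : ℕ) : qNat 1 l = l := by simp [qNat]

lemma tendsto_qNat_atTop {p : ℝ} (hp : |p| < 1) : Tendsto (qNat p) atTop (𝓝 (1 - p)⁻¹) :=
  (hasSum_geometric_of_abs_lt_one hp).tendsto_sum_nat

lemma qFactorial_pos {p : ℝ} (hp : 0 ≤ p) (n : ℕ) : 0 < qFactorial p n := by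
  induction n with
  | zero => exact one_pos
  | succ n ih => exact mul_pos ih (one_pos.trans_le (one_le_qNat_succ hp n))

lemma qFactorial_le_qFactorial {p q : ℝ} (hp : 0 ≤ p) (hpq : p ≤ q) (n : ℕ) :
    qFactorial p n ≤ qFactorial q n := by
  induction n with
  | zero => exact le_rfl
  | succ n ih =>
    exact mul_le_mul ih (qNat_le_qNat hp hpq _) (qNat_nonneg hp _)
      ((qFactorial_pos hp n).le.trans ih)

lemma qFactorial_one (n : ℕ) : qFactorial 1 n = n ! := by
  induction n with
  | zero => simp [qFactorial]
  | succ n ih => simp [qFactorial, qNat_one, ih, Nat.factorial_succ, mul_comm]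

lemma continuous_qFactorial (n : ℕ) : Continuous fun p : ℝ => qFactorial p n := by
  induction n with
  | zero => exact continuous_const
  | succ n ih => exact ih.mul (continuous_finsetSum _ fun i _ => continuous_pow i)

lemma summable_pow_div_qFactorial {p r : ℝ} (hp : 0 ≤ p) (hr : |r| < (1 - p)⁻¹) :
    Summable fun n => r ^ n / qFactorial p n := by
  have hp1 : p < 1 := by simpa using (abs_nonneg r).trans_lt hr
  have hlim : Tendsto (fun n => |r| / qNat p (n + 1)) atTop (𝓝 (|r| / (1 - p)⁻¹)) :=
    tendsto_const_nhds.div ((tendsto_qNat_atTop (abs_lt.2 ⟨by linarith, hp1⟩)).comp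
      (tendsto_add_atTop_nat 1)) (inv_ne_zero (sub_pos.2 hp1).ne')
  obtain ⟨c, hc, hc1⟩ := exists_between ((div_lt_one (by simpa using sub_pos.2 hp1)).2 hr)
  refine summable_of_ratio_norm_eventually_le hc1
    ((hlim.eventually (eventually_le_nhds hc)).mono fun n hn => ?_)
  have hqFactorial := qFactorial_pos hp n
  have hqNat := one_pos.trans_le (one_le_qNat_succ hp n)
  calc ‖r ^ (n + 1) / qFactorial p (n + 1)‖
      = |r| / qNat p (n + 1) * ‖r ^ n / qFactorial p n‖ := by
        simp only [qFactorial, norm_div, norm_pow, Real.norm_eq_abs, abs_of_pos hqFactorial,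
          abs_of_pos (mul_pos hqFactorial hqNat), pow_succ, abs_mul, abs_pow]
        field_simp
    _ ≤ c * ‖r ^ n / qFactorial p n‖ := mul_le_mul_of_nonneg_right hn (norm_nonneg _)

lemma eventually_lt_inv_one_sub (R : ℝ) : ∀ᶠ p in 𝓝[<] (1 : ℝ), R < (1 - p)⁻¹ := by
  have h : Tendsto (fun p : ℝ => 1 - p) (𝓝[<] 1) (𝓝[>] 0) := by
    refine tendsto_nhdsWithin_iff.2
      ⟨?_, eventually_mem_nhdsWithin.mono fun p hp => Set.mem_Ioi.2 (sub_pos.2 hp)⟩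
    simpa using (tendsto_const_nhds.sub tendsto_id : Tendsto (fun p : ℝ => 1 - p) (𝓝 1) _)
      |>.mono_left nhdsWithin_le_nhds
  exact (tendsto_inv_nhdsGT_zero.comp h).eventually_gt_atTop R

lemma norm_qExpC_sub_exp_le {p R : ℝ} (hp : 0 ≤ p) (hR : R < (1 - p)⁻¹) {z : ℂ}
    (hz : ‖z‖ ≤ R) :
    ‖qExpC p z - Complex.exp z‖ ≤ ∑' n, R ^ n * |(qFactorial p n)⁻¹ - (n ! : ℝ)⁻¹| := by
  have hR0 : 0 ≤ R := (norm_nonneg z).trans hz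
  have hqFactorial := qFactorial_pos hp
  have hq : Summable fun n => R ^ n / qFactorial p n :=
    summable_pow_div_qFactorial hp (by rwa [abs_of_nonneg hR0])
  have hbound : Summable fun n => R ^ n * |(qFactorial p n)⁻¹ - (n ! : ℝ)⁻¹| := by
    refine (hq.add (Real.summable_pow_div_factorial R)).of_nonneg_of_le
      (fun n => by positivity) fun n => ?_
    calc R ^ n * |(qFactorial p n)⁻¹ - (n ! : ℝ)⁻¹|
        ≤ R ^ n * ((qFactorial p n)⁻¹ + (n ! : ℝ)⁻¹) := by
          gcongr
          exact (abs_sub _ _).trans_eq <| by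
            rw [abs_of_pos (inv_pos.2 (hqFactorial n)), abs_of_pos (by positivity)]
      _ = R ^ n / qFactorial p n + R ^ n / n ! := by ring
  have hqC : Summable fun n => z ^ n / (qFactorial p n : ℂ) := by
    refine hq.of_norm_bounded fun n => ?_
    rw [norm_div, norm_pow, Complex.norm_real, Real.norm_of_nonneg (hqFactorial n).le]
    exact div_le_div_of_nonneg_right (pow_le_pow_left₀ (norm_nonneg z) hz n) (hqFactorial n).le
  have hdiff : qExpC p z - Complex.exp z =
      ∑' n, (z ^ n / (qFactorial p n : ℂ) - z ^ n / n !) := by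
    rw [qExpC, Complex.exp_eq_exp_ℂ, NormedSpace.exp_eq_tsum_div,
      hqC.tsum_sub (NormedSpace.expSeries_div_summable z)]
  rw [hdiff]
  refine tsum_of_norm_bounded hbound.hasSum fun n => ?_
  have hterm : z ^ n / (qFactorial p n : ℂ) - z ^ n / n ! =
      z ^ n * (((qFactorial p n)⁻¹ - (n ! : ℝ)⁻¹ : ℝ) : ℂ) := by
    push_cast; ring
  rw [hterm, norm_mul, norm_pow, Complex.norm_real, Real.norm_eq_abs]
  gcongr

lemma tendsto_tsum_pow_mul_abs_inv_qFactorial_sub (R : ℝ) :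
    Tendsto (fun p => ∑' n, R ^ n * |(qFactorial p n)⁻¹ - (n ! : ℝ)⁻¹|) (𝓝[<] 1) (𝓝 0) := by
  obtain ⟨p₁, hp₁0, hp₁1, hR⟩ := ((eventually_nhdsWithin_of_eventually_nhds
    (eventually_ge_nhds zero_lt_one)).and (eventually_mem_nhdsWithin.and
      (eventually_lt_inv_one_sub |R|))).exists
  have hpointwise (n : ℕ) :
      Tendsto (fun p => R ^ n * |(qFactorial p n)⁻¹ - (n ! : ℝ)⁻¹|) (𝓝[<] 1) (𝓝 0) := by
    have hcont : ContinuousAt (fun p => R ^ n * |(qFactorial p n)⁻¹ - (n ! : ℝ)⁻¹|) 1 :=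
      continuousAt_const.mul (((continuous_qFactorial n).continuousAt.inv₀
        (by rw [qFactorial_one]; positivity)).sub continuousAt_const).abs
    simpa [qFactorial_one] using hcont.tendsto.mono_left nhdsWithin_le_nhds
  have hdominated : ∀ᶠ p in 𝓝[<] (1 : ℝ), ∀ n,
      ‖R ^ n * |(qFactorial p n)⁻¹ - (n ! : ℝ)⁻¹|‖ ≤ |R| ^ n / qFactorial p₁ n := by
    filter_upwards [Ioo_mem_nhdsLT hp₁1] with p hp n
    have hp0 : 0 ≤ p := hp₁0.trans hp.1.le
    have hlower := qFactorial_le_qFactorial hp₁0 hp.1.le n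
    have hupper := (qFactorial_le_qFactorial hp0 hp.2.le n).trans_eq (qFactorial_one n)
    have hpos := qFactorial_pos hp₁0 n
    rw [norm_mul, norm_pow, Real.norm_eq_abs, Real.norm_eq_abs, abs_abs, div_eq_mul_inv,
      abs_of_nonneg (sub_nonneg.2 (inv_anti₀ (qFactorial_pos hp0 n) hupper))]
    gcongr
    linarith [inv_anti₀ hpos hlower, inv_nonneg.2 (Nat.cast_nonneg (α := ℝ) n !)]
  simpa using tendsto_tsum_of_dominated_convergence
    (summable_pow_div_qFactorial hp₁0 (by rwa [abs_abs])) hpointwise hdominated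

/-- `e_p` converges uniformly to the exponential function on every compact
subset of `ℂ` as `p → 1⁻`: for every compact `K ⊆ ℂ` and `δ > 0` there is `p₀ ∈ (0,1)`
such that for all `p ∈ (p₀, 1)`, `K` lies in the open disk of radius `1/(1-p)` and
`sup_{z ∈ K} |e_p(z) − exp z| < δ`. -/
theorem qExpC_tendsto_exp_uniformly_on_compacts :
    ∀ K : Set ℂ, IsCompact K → ∀ δ : ℝ, 0 < δ →
      ∃ p₀ ∈ Set.Ioo (0 : ℝ) 1, ∀ p ∈ Set.Ioo p₀ 1,
        (∀ z ∈ K, ‖z‖ < 1 / (1 - p)) ∧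
        ∀ z ∈ K, ‖qExpC p z - Complex.exp z‖ < δ := by
  intro K hK δ hδ
  obtain ⟨R, hR⟩ := hK.isBounded.exists_norm_le
  have hgood := (eventually_lt_inv_one_sub R).and
    ((tendsto_tsum_pow_mul_abs_inv_qFactorial_sub R).eventually (eventually_lt_nhds hδ))
  obtain ⟨p₁, hp₁, hsub⟩ := (nhdsLT_basis (1 : ℝ)).mem_iff.1 hgood
  refine ⟨max p₁ 2⁻¹, ⟨by positivity, max_lt hp₁ (by norm_num)⟩, fun p hp => ?_⟩
  have hp0 : 0 ≤ p := by linarith [le_max_right p₁ 2⁻¹, hp.1]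
  obtain ⟨hpR, hsmall⟩ := hsub ⟨(le_max_left _ _).trans_lt hp.1, hp.2⟩
  refine ⟨fun z hz => ?_, fun z hz => ?_⟩
  · rw [one_div]
    exact (hR z hz).trans_lt hpR
  · exact (norm_qExpC_sub_exp_le hp0 hpR (hR z hz)).trans_lt hsmall
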